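/- Let p be a prime, d ≥ 2, and let x, y be coprime integers with p dividing x^m + y^m and p not dividing x, where m ≥ 1. Set c = x^m/(x^m + y^m) ∈ ℚ. If d does not divide v_p(x^m + y^m), then the polynomial f(z) = z^d + c has no preperiodic points in ℚ. -/

import Mathlib

/-!
Since `p ∤ x`, the constant `c = x^m / (x^m + y^m)` has `v_p(c) = -v_p(x^m + y^m) < 0`, and this
valuation is not a multiple of `d`. Hence `v_p(w^d) = d v_p(w) ≠ v_p(c)` for every `w`, so the
ultrametric inequality is an equality: `v_p(f(w)) = min(d v_p(w), v_p(c)) ≤ v_p(c) < 0`. From the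
first iterate on, `v_p` is therefore multiplied by `d ≥ 2` at each step, so it strictly decreases
along the orbit and the orbit is infinite.
-/

open Function

theorem add_ne_zero_of_padicValRat_ne {p : ℕ} {q r : ℚ}
    (h : padicValRat p q ≠ padicValRat p r) : q + r ≠ 0 := by
  intro hqr
  rw [eq_neg_of_add_eq_zero_left hqr, padicValRat.neg] at h
  exact h rfl

theorem padicValRat_intCast_div_of_not_dvd {p : ℕ} [Fact p.Prime] {a : ℤ} (b : ℤ)
    (ha : ¬ (p : ℤ) ∣ a) :
    padicValRat p ((a : ℚ) / b) = -padicValInt p b := by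
  have ha0 : (a : ℚ) ≠ 0 := Int.cast_ne_zero.mpr (by rintro rfl; exact ha (dvd_zero _))
  obtain rfl | hb := eq_or_ne b 0
  · simp
  rw [padicValRat.div ha0 (by exact_mod_cast hb), padicValRat.of_int, padicValRat.of_int,
    padicValInt.eq_zero_of_not_dvd ha, Nat.cast_zero, zero_sub]

section PowAdd

variable {p : ℕ} [Fact p.Prime] {d : ℕ} {c : ℚ}

theorem padicValRat_pow_add_le (hdc : ¬ (d : ℤ) ∣ padicValRat p c) (w : ℚ) :
    w ^ d + c ≠ 0 ∧ padicValRat p (w ^ d + c) ≤ padicValRat p c := by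
  have hc : c ≠ 0 := by rintro rfl; exact hdc (by simp)
  obtain hw | hw := eq_or_ne (w ^ d) 0
  · simpa [hw] using hc
  have hne : padicValRat p (w ^ d) ≠ padicValRat p c := by
    rw [padicValRat.pow]
    exact fun h => hdc ⟨_, h.symm⟩
  have hsum := add_ne_zero_of_padicValRat_ne hne
  exact ⟨hsum, (padicValRat.add_eq_min hsum hw hc hne).trans_le (min_le_right _ _)⟩

theorem padicValRat_pow_add_of_lt (hc : c ≠ 0) {w : ℚ} (hw : w ≠ 0)
    (hlt : d * padicValRat p w < padicValRat p c) :
    padicValRat p (w ^ d + c) = d * padicValRat p w := by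
  rw [← padicValRat.pow] at hlt ⊢
  exact padicValRat.add_eq_of_lt (add_ne_zero_of_padicValRat_ne hlt.ne) (pow_ne_zero _ hw) hc hlt

theorem infinite_orbit_pow_add_of_padicValRat (hd : 2 ≤ d) (hneg : padicValRat p c < 0)
    (hdc : ¬ (d : ℤ) ∣ padicValRat p c) (z : ℚ) :
    (Set.range fun n => (fun u : ℚ => u ^ d + c)^[n] z).Infinite := by
  set f : ℚ → ℚ := fun u => u ^ d + c
  have hc : c ≠ 0 := by rintro rfl; simp at hneg
  have hescape (n : ℕ) : padicValRat p (f^[n + 2] z) < padicValRat p (f^[n + 1] z) := by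
    obtain ⟨hw, hle⟩ := padicValRat_pow_add_le hdc (f^[n] z)
    have hd' : (2 : ℤ) ≤ d := by exact_mod_cast hd
    have hlt : d * padicValRat p (f^[n + 1] z) < padicValRat p (f^[n + 1] z) := by
      rw [iterate_succ_apply']; nlinarith
    rw [iterate_succ_apply' f (n + 1), padicValRat_pow_add_of_lt hc]
    · exact hlt
    · rwa [iterate_succ_apply']
    · exact hlt.trans_le (by rwa [iterate_succ_apply'])
  have hinj : Injective fun n => f^[n + 1] z :=
    Injective.of_comp (f := padicValRat p)
      (strictAnti_nat_of_succ_lt (f := fun n => padicValRat p (f^[n + 1] z)) hescape).injective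
  refine (Set.infinite_range_of_injective hinj).mono ?_
  rintro _ ⟨n, rfl⟩
  exact ⟨n + 1, rfl⟩

end PowAdd

theorem no_rational_preperiodic_of_bad_valuation_general
    (p : ℕ) (hp : p.Prime) (d m : ℕ) (hd : 2 ≤ d)
    (x y : ℤ)
    (hpx : ¬ (p : ℤ) ∣ x)
    (hndvd : ¬ (d : ℤ) ∣ (padicValInt p (x ^ m + y ^ m) : ℤ)) :
    ∀ z : ℚ,
      ¬ ({w : ℚ | ∃ n : ℕ,
            (fun u : ℚ => u ^ d + (x : ℚ) ^ m / ((x : ℚ) ^ m + (y : ℚ) ^ m))^[n] z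
              = w}).Finite := by
  intro z
  have : Fact p.Prime := ⟨hp⟩
  have hpxm : ¬ (p : ℤ) ∣ x ^ m := fun h =>
    hpx ((Nat.prime_iff_prime_int.mp hp).dvd_of_dvd_pow h)
  have hval : padicValRat p ((x : ℚ) ^ m / ((x : ℚ) ^ m + (y : ℚ) ^ m))
      = -padicValInt p (x ^ m + y ^ m) := by
    exact_mod_cast padicValRat_intCast_div_of_not_dvd (x ^ m + y ^ m) hpxm
  have hv0 : padicValInt p (x ^ m + y ^ m) ≠ 0 := by
    rintro h
    rw [h] at hndvd
    exact hndvd (dvd_zero _)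
  refine infinite_orbit_pow_add_of_padicValRat (p := p) hd ?_ ?_ z
  · rw [hval]; omega
  · rwa [hval, dvd_neg]

/-- If `p` is prime, `d ≥ 2`, `x, y` coprime integers with
`p ∣ x^m + y^m`, `p ∤ x`, and `d ∤ v_p(x^m + y^m)`, then
`f(z) = z^d + x^m/(x^m + y^m)` has no preperiodic points in `ℚ`. -/
theorem no_rational_preperiodic_of_bad_valuation
    (p : ℕ) (hp : p.Prime) (d m : ℕ) (hd : 2 ≤ d) (hm : 1 ≤ m)
    (x y : ℤ) (hxy : IsCoprime x y)
    (hpdvd : (p : ℤ) ∣ x ^ m + y ^ m) (hpx : ¬ (p : ℤ) ∣ x)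
    (hndvd : ¬ (d : ℤ) ∣ (padicValInt p (x ^ m + y ^ m) : ℤ)) :
    ∀ z : ℚ,
      ¬ ({w : ℚ | ∃ n : ℕ,
            (fun u : ℚ => u ^ d + (x : ℚ) ^ m / ((x : ℚ) ^ m + (y : ℚ) ^ m))^[n] z
              = w}).Finite :=
  no_rational_preperiodic_of_bad_valuation_general p hp d m hd x y hpx hndvd
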